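/- arXiv:2211.12074 — 3 statements merged into one kernel-verified Lean document; each statement's English description precedes it below -/
import Mathlib

section
/- Let μ, λ, c be real numbers with μ > 0, λ + 2μ > 0 and 2λ + μ > 0. Then there exist constants 0 < c₁⁺ ≤ C₁⁺ such that for every symmetric matrix S ∈ ℝ^{3×3} one has c₁⁺‖S‖² ≤ μ‖S‖² + (λμ/(λ+2μ))·(tr S)² ≤ C₁⁺‖S‖². (Positive definiteness of the shell energy density W_shell^∞(S) = μ‖S‖² + (λμ/(λ+2μ))(tr S)² on symmetric matrices.) -/
open Matrix

/-- Squared Frobenius norm of a real matrix: ‖X‖² = tr(X Xᵀ). -/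
noncomputable def frobSq {m n : ℕ} (X : Matrix (Fin m) (Fin n) ℝ) : ℝ :=
  Matrix.trace (X * Xᵀ)

lemma frobSq_nonneg (S : Matrix (Fin 3) (Fin 3) ℝ) : 0 ≤ frobSq S := by
  simp only [frobSq, Matrix.trace, Matrix.diag, Matrix.mul_apply, Matrix.transpose_apply,
    Fin.sum_univ_three]
  nlinarith [sq_nonneg (S 0 0), sq_nonneg (S 0 1), sq_nonneg (S 0 2), sq_nonneg (S 1 0),
    sq_nonneg (S 1 1), sq_nonneg (S 1 2), sq_nonneg (S 2 0), sq_nonneg (S 2 1), sq_nonneg (S 2 2)]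

lemma trace_sq_le (S : Matrix (Fin 3) (Fin 3) ℝ) :
    (Matrix.trace S) ^ 2 ≤ 3 * frobSq S := by
  simp only [frobSq, Matrix.trace, Matrix.diag, Matrix.mul_apply, Matrix.transpose_apply,
    Fin.sum_univ_three]
  nlinarith [sq_nonneg (S 0 0 - S 1 1), sq_nonneg (S 0 0 - S 2 2), sq_nonneg (S 1 1 - S 2 2),
    sq_nonneg (S 0 1), sq_nonneg (S 0 2), sq_nonneg (S 1 0),
    sq_nonneg (S 1 2), sq_nonneg (S 2 0), sq_nonneg (S 2 1)]

/-- Positive definiteness of the shell energy density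
`W_shell^∞(S) = μ‖S‖² + (λμ/(λ+2μ))(tr S)²` on symmetric matrices. -/
theorem shell_energy_pos_def (μ lam : ℝ) (hμ : 0 < μ)
    (h1 : 0 < lam + 2 * μ) (h2 : 0 < 2 * lam + μ) :
    ∃ c₁ C₁ : ℝ, 0 < c₁ ∧ c₁ ≤ C₁ ∧
      ∀ S : Matrix (Fin 3) (Fin 3) ℝ, Sᵀ = S →
        c₁ * frobSq S ≤ μ * frobSq S + lam * μ / (lam + 2 * μ) * (Matrix.trace S) ^ 2 ∧
        μ * frobSq S + lam * μ / (lam + 2 * μ) * (Matrix.trace S) ^ 2 ≤ C₁ * frobSq S := by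
  set k : ℝ := lam * μ / (lam + 2 * μ) with hk
  refine ⟨min μ (μ + 3 * k), max μ (μ + 3 * k), ?_, ?_, ?_⟩
  · have : 0 < μ + 3 * k := by
      rw [hk]
      have : μ + 3 * (lam * μ / (lam + 2 * μ)) = 2 * μ * (2 * lam + μ) / (lam + 2 * μ) := by
        rw [eq_div_iff h1.ne', add_mul, mul_assoc 3, div_mul_cancel₀ _ h1.ne']; ring
      rw [this]
      positivity
    exact lt_min hμ this
  · exact min_le_max
  · intro S _
    have hf := frobSq_nonneg S
    have ht := trace_sq_le S
    have hts := sq_nonneg (Matrix.trace S)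
    constructor
    · rcases le_or_gt 0 k with hk0 | hk0
      · calc min μ (μ + 3 * k) * frobSq S ≤ μ * frobSq S := by
              apply mul_le_mul_of_nonneg_right (min_le_left _ _) hf
          _ ≤ μ * frobSq S + k * (Matrix.trace S) ^ 2 := by nlinarith
      · calc min μ (μ + 3 * k) * frobSq S ≤ (μ + 3 * k) * frobSq S := by
              apply mul_le_mul_of_nonneg_right (min_le_right _ _) hf
          _ ≤ μ * frobSq S + k * (Matrix.trace S) ^ 2 := by nlinarith
    · rcases le_or_gt 0 k with hk0 | hk0
      · calc μ * frobSq S + k * (Matrix.trace S) ^ 2 ≤ (μ + 3 * k) * frobSq S := by nlinarith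
          _ ≤ max μ (μ + 3 * k) * frobSq S := by
              apply mul_le_mul_of_nonneg_right (le_max_right _ _) hf
      · calc μ * frobSq S + k * (Matrix.trace S) ^ 2 ≤ μ * frobSq S := by nlinarith
          _ ≤ max μ (μ + 3 * k) * frobSq S := by
              apply mul_le_mul_of_nonneg_right (le_max_left _ _) hf
end

section
/- For all matrices G, R, L ∈ ℝ^{2×2} with L ≠ 0, one has ‖G‖² + ‖R − 2 G L‖² ≥ min{ 1/4 , 1/(16‖L‖²) } · ( ‖G‖² + ‖R‖² ). (Quantitative pointwise form of the key estimate in Lemma 4.2: the change-of-metric and change-of-curvature measures control the Koiter strain measures.) -/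
open Matrix

/-!
By the triangle inequality and submultiplicativity, `‖R‖ ≤ ‖R - 2GL‖ + 2‖G‖‖L‖`, hence
`‖R‖² ≤ 2‖R - 2GL‖² + 8‖G‖²‖L‖²`. Multiplying by `c = min (1/4) (1/(16‖L‖²))` and using
`c ≤ 1/4`, `16 c ‖L‖² ≤ 1` gives `c (‖G‖² + ‖R‖²) ≤ ‖G‖²/4 + ‖R - 2GL‖²/2 + ‖G‖²/2`.
-/

open scoped Matrix.Norms.Frobenius

theorem frobSq_eq_norm_sq {m n : ℕ} (X : Matrix (Fin m) (Fin n) ℝ) : frobSq X = ‖X‖ ^ 2 := by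
  rw [frobenius_norm_def, ← Real.rpow_natCast, ← Real.rpow_mul (by positivity)]
  norm_num [frobSq, Matrix.trace, Matrix.mul_apply, sq]

theorem min_mul_sq_add_sq_le_of_le_add {g d r l : ℝ} (hr : 0 ≤ r) (hrd : r ≤ d + 2 * g * l) :
    min (1 / 4) (1 / (16 * l ^ 2)) * (g ^ 2 + r ^ 2) ≤ g ^ 2 + d ^ 2 := by
  set c := min (1 / 4 : ℝ) (1 / (16 * l ^ 2))
  have hc_nonneg : 0 ≤ c := le_min (by norm_num) (by positivity)
  have hc_le : c ≤ 1 / 4 := min_le_left _ _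
  have hc_mul : c * (16 * l ^ 2) ≤ 1 :=
    mul_le_of_le_div₀ zero_le_one (by positivity) (min_le_right _ _)
  have hr_sq : r ^ 2 ≤ 2 * d ^ 2 + 8 * g ^ 2 * l ^ 2 := by
    nlinarith [sq_nonneg (d - 2 * g * l)]
  calc c * (g ^ 2 + r ^ 2) ≤ c * g ^ 2 + 2 * c * d ^ 2 + c * (16 * l ^ 2) * (g ^ 2 / 2) := by
        nlinarith [mul_le_mul_of_nonneg_left hr_sq hc_nonneg]
    _ ≤ 1 / 4 * g ^ 2 + 2 * (1 / 4) * d ^ 2 + 1 * (g ^ 2 / 2) := by gcongr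
    _ ≤ g ^ 2 + d ^ 2 := by nlinarith [sq_nonneg g, sq_nonneg d]

theorem min_mul_frobenius_norm_sq_add_le {l m n : Type*} [Fintype l] [Fintype m] [Fintype n]
    (G : Matrix l m ℝ) (L : Matrix m n ℝ) (R : Matrix l n ℝ) :
    min (1 / 4) (1 / (16 * ‖L‖ ^ 2)) * (‖G‖ ^ 2 + ‖R‖ ^ 2) ≤
      ‖G‖ ^ 2 + ‖R - (2 : ℝ) • (G * L)‖ ^ 2 := by
  refine min_mul_sq_add_sq_le_of_le_add (norm_nonneg R) ?_
  calc ‖R‖ ≤ ‖R - (2 : ℝ) • (G * L)‖ + ‖(2 : ℝ) • (G * L)‖ := norm_le_norm_sub_add R _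
    _ ≤ ‖R - (2 : ℝ) • (G * L)‖ + 2 * ‖G‖ * ‖L‖ := by
        rw [norm_smul, Real.norm_two, mul_assoc]
        gcongr
        exact frobenius_norm_mul G L

theorem koiter_strain_control_general (G R L : Matrix (Fin 2) (Fin 2) ℝ) :
    frobSq G + frobSq (R - (2 : ℝ) • (G * L)) ≥
      min (1 / 4 : ℝ) (1 / (16 * frobSq L)) * (frobSq G + frobSq R) := by
  simp only [frobSq_eq_norm_sq]
  exact min_mul_frobenius_norm_sq_add_le G L R

/-- Quantitative pointwise form of the key estimate in Lemma 4.2: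
for all `G R L ∈ ℝ^{2×2}` with `L ≠ 0`,
`‖G‖² + ‖R − 2GL‖² ≥ min{1/4, 1/(16‖L‖²)}·(‖G‖² + ‖R‖²)`. -/
theorem koiter_strain_control (G R L : Matrix (Fin 2) (Fin 2) ℝ) (hL : L ≠ 0) :
    frobSq G + frobSq (R - (2 : ℝ) • (G * L)) ≥
      min (1 / 4 : ℝ) (1 / (16 * frobSq L)) * (frobSq G + frobSq R) :=
  koiter_strain_control_general G R L
end

section
/- Let a₁, a₂ ∈ ℝ³ with a₁ × a₂ ≠ 0, let w₁, w₂ ∈ ℝ³, and let Y = (a₁|a₂), V = (w₁|w₂) ∈ ℝ^{3×2} denote the matrices with these columns; set n₀ := (a₁ × a₂)/‖a₁ × a₂‖ and I := YᵀY. Then the map n(t) := ((a₁ + t w₁) × (a₂ + t w₂)) / ‖(a₁ + t w₁) × (a₂ + t w₂)‖, defined for t in a neighborhood of 0, is differentiable at t = 0 with derivative n′(0) = (1/‖a₁ × a₂‖)·(a₁ × w₂ + w₁ × a₂) − tr( I⁻¹ · sym(YᵀV) ) · n₀. (Linearization of the unit normal vector to the deformed midsurface.) -/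
open Matrix
open scoped Matrix

/-- The 3×2 matrix with columns `u, v ∈ ℝ³`. -/
noncomputable def colMat (u v : Fin 3 → ℝ) : Matrix (Fin 3) (Fin 2) ℝ :=
  Matrix.of fun i α => ![u, v] α i

/-- Symmetric part of a square matrix: sym M = (M + Mᵀ)/2. -/
noncomputable def symPart (M : Matrix (Fin 2) (Fin 2) ℝ) : Matrix (Fin 2) (Fin 2) ℝ :=
  (1 / 2 : ℝ) • (M + Mᵀ)

/-- Euclidean norm on ℝ³ (via the dot product). -/
noncomputable def enorm3 (u : Fin 3 → ℝ) : ℝ := Real.sqrt (u ⬝ᵥ u)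

lemma det_gram (a₁ a₂ : Fin 3 → ℝ) :
    ((colMat a₁ a₂)ᵀ * colMat a₁ a₂).det = (a₁ ⨯₃ a₂) ⬝ᵥ (a₁ ⨯₃ a₂) := by
  simp [Matrix.det_fin_two, colMat, Matrix.mul_apply, dotProduct, crossProduct,
    Fin.sum_univ_three]
  ring

lemma trace_adj (a₁ a₂ w₁ w₂ : Fin 3 → ℝ) :
    Matrix.trace ((((colMat a₁ a₂)ᵀ * colMat a₁ a₂).adjugate) *
        symPart ((colMat a₁ a₂)ᵀ * colMat w₁ w₂)) =
      (a₁ ⨯₃ a₂) ⬝ᵥ (a₁ ⨯₃ w₂ + w₁ ⨯₃ a₂) := by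
  simp [Matrix.trace_fin_two, Matrix.adjugate_fin_two, symPart, colMat,
    Matrix.mul_apply, Matrix.vecMul, Matrix.add_apply, Matrix.smul_apply,
    Matrix.transpose_apply, dotProduct, crossProduct,
    Fin.sum_univ_two, Fin.sum_univ_three]
  ring

lemma cross_expand (a₁ a₂ w₁ w₂ : Fin 3 → ℝ) (t : ℝ) :
    (a₁ + t • w₁) ⨯₃ (a₂ + t • w₂) =
      a₁ ⨯₃ a₂ + t • (a₁ ⨯₃ w₂ + w₁ ⨯₃ a₂) + (t*t) • (w₁ ⨯₃ w₂) := by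
  funext i
  fin_cases i <;>
    simp [crossProduct, Pi.add_apply, Pi.smul_apply, smul_eq_mul] <;> ring

/-- Linearization of the unit normal vector to the deformed midsurface:
with `c(t) = (a₁ + t w₁) × (a₂ + t w₂)` and `n(t) = c(t)/‖c(t)‖`, the map `n`
is differentiable at `t = 0` with derivative
`n′(0) = ‖a₁ × a₂‖⁻¹·(a₁ × w₂ + w₁ × a₂) − tr(I⁻¹·sym(YᵀV))·n₀`,
where `Y = (a₁|a₂)`, `V = (w₁|w₂)`, `I = YᵀY` and `n₀ = (a₁ × a₂)/‖a₁ × a₂‖`. -/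
theorem unit_normal_hasDerivAt (a₁ a₂ w₁ w₂ : Fin 3 → ℝ) (h : a₁ ⨯₃ a₂ ≠ 0) :
    HasDerivAt
      (fun t : ℝ =>
        (enorm3 ((a₁ + t • w₁) ⨯₃ (a₂ + t • w₂)))⁻¹ • ((a₁ + t • w₁) ⨯₃ (a₂ + t • w₂)))
      ((enorm3 (a₁ ⨯₃ a₂))⁻¹ • (a₁ ⨯₃ w₂ + w₁ ⨯₃ a₂) -
        Matrix.trace (((colMat a₁ a₂)ᵀ * colMat a₁ a₂)⁻¹ *
            symPart ((colMat a₁ a₂)ᵀ * colMat w₁ w₂)) •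
          ((enorm3 (a₁ ⨯₃ a₂))⁻¹ • (a₁ ⨯₃ a₂)))
      0 := by
  set c0 : Fin 3 → ℝ := a₁ ⨯₃ a₂ with hc0
  set d : Fin 3 → ℝ := a₁ ⨯₃ w₂ + w₁ ⨯₃ a₂ with hd
  set e : Fin 3 → ℝ := w₁ ⨯₃ w₂ with he
  set q0 : ℝ := c0 ⬝ᵥ c0 with hq0def
  have hq0 : 0 < q0 := by
    rcases lt_or_eq_of_le (Finset.sum_nonneg fun i _ => mul_self_nonneg (c0 i) :
        (0:ℝ) ≤ q0) with h1 | h1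
    · exact h1
    · exact absurd (dotProduct_self_eq_zero.mp h1.symm) h
  have hs0 : 0 < Real.sqrt q0 := Real.sqrt_pos.mpr hq0
  -- derivative of c
  have hc : HasDerivAt (fun t : ℝ => (a₁ + t • w₁) ⨯₃ (a₂ + t • w₂)) d 0 := by
    have hA : HasDerivAt (fun t : ℝ => t • d) ((1:ℝ) • d) 0 :=
      (hasDerivAt_id (0:ℝ)).smul_const d
    have hB : HasDerivAt (fun t : ℝ => (t*t) • e) ((1 * id (0:ℝ) + id (0:ℝ) * 1) • e) 0 :=
      ((hasDerivAt_id (0:ℝ)).mul (hasDerivAt_id (0:ℝ))).smul_const e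
    have h1 := ((hasDerivAt_const (0:ℝ) c0).add hA).add hB
    simp only [cross_expand, ← hc0, ← hd, ← he]
    simp at h1; exact h1
  have hci : ∀ i, HasDerivAt (fun t : ℝ => ((a₁ + t • w₁) ⨯₃ (a₂ + t • w₂)) i) (d i) 0 :=
    hasDerivAt_pi.mp hc
  have hv0 : ((a₁ + (0:ℝ) • w₁) ⨯₃ (a₂ + (0:ℝ) • w₂)) = c0 := by simp [hc0]
  have hq : HasDerivAt (fun t : ℝ => ((a₁ + t • w₁) ⨯₃ (a₂ + t • w₂)) ⬝ᵥ
      ((a₁ + t • w₁) ⨯₃ (a₂ + t • w₂))) (2 * (c0 ⬝ᵥ d)) 0 := by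
    have h1 : HasDerivAt (fun t : ℝ => ∑ i, ((a₁ + t • w₁) ⨯₃ (a₂ + t • w₂)) i *
        ((a₁ + t • w₁) ⨯₃ (a₂ + t • w₂)) i)
        (∑ i, (d i * c0 i + c0 i * d i)) 0 := by
      refine HasDerivAt.fun_sum fun i _ => ?_
      have h2 := (hci i).mul (hci i)
      rw [hv0] at h2
      exact h2
    have h2 : (∑ i, (d i * c0 i + c0 i * d i)) = 2 * (c0 ⬝ᵥ d) := by
      simp [dotProduct, two_mul, Finset.sum_add_distrib, mul_comm]
    rw [← h2]
    exact h1
  have hfx : ((a₁ + (0:ℝ) • w₁) ⨯₃ (a₂ + (0:ℝ) • w₂)) ⬝ᵥ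
      ((a₁ + (0:ℝ) • w₁) ⨯₃ (a₂ + (0:ℝ) • w₂)) = q0 := by rw [hv0]
  have hsq : HasDerivAt (fun t : ℝ => enorm3 ((a₁ + t • w₁) ⨯₃ (a₂ + t • w₂)))
      ((2 * (c0 ⬝ᵥ d)) / (2 * Real.sqrt q0)) 0 := by
    have h5 := hq.sqrt (by rw [hfx]; exact hq0.ne')
    rw [hfx] at h5
    exact h5
  have hinv : HasDerivAt (fun t : ℝ => (enorm3 ((a₁ + t • w₁) ⨯₃ (a₂ + t • w₂)))⁻¹)
      (-((2 * (c0 ⬝ᵥ d)) / (2 * Real.sqrt q0)) / (Real.sqrt q0) ^ 2) 0 := by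
    have hne : enorm3 ((a₁ + (0:ℝ) • w₁) ⨯₃ (a₂ + (0:ℝ) • w₂)) ≠ 0 := by
      rw [show enorm3 ((a₁ + (0:ℝ) • w₁) ⨯₃ (a₂ + (0:ℝ) • w₂)) = Real.sqrt q0 by
        rw [enorm3, hv0, hq0def]]
      exact hs0.ne'
    have h6 := hsq.inv hne
    have h4 : enorm3 ((a₁ + (0:ℝ) • w₁) ⨯₃ (a₂ + (0:ℝ) • w₂)) = Real.sqrt q0 := by
      rw [enorm3, hv0, hq0def]
    rw [h4] at h6
    exact h6
  have hfin := hinv.smul hc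
  have htr : Matrix.trace (((colMat a₁ a₂)ᵀ * colMat a₁ a₂)⁻¹ *
      symPart ((colMat a₁ a₂)ᵀ * colMat w₁ w₂)) = (c0 ⬝ᵥ d) / q0 := by
    rw [Matrix.inv_def, Matrix.smul_mul, Matrix.trace_smul, trace_adj, det_gram,
      Ring.inverse_eq_inv]
    rw [← hc0, ← hd, ← hq0def]
    simp [smul_eq_mul, div_eq_inv_mul]
  rw [htr]
  have hen : enorm3 c0 = Real.sqrt q0 := by rw [enorm3, hq0def]
  have hval : enorm3 ((a₁ + (0:ℝ) • w₁) ⨯₃ (a₂ + (0:ℝ) • w₂)) = Real.sqrt q0 := by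
    rw [enorm3, hv0, hq0def]
  have hsqrt2 : (Real.sqrt q0) ^ 2 = q0 := Real.sq_sqrt hq0.le
  convert hfin using 1
  any_goals rfl
  rw [hval, hv0, hen]
  rw [sub_eq_add_neg, smul_smul, ← neg_smul, add_comm ((Real.sqrt q0)⁻¹ • d)]
  rw [add_comm ((Real.sqrt q0)⁻¹ • d)]
  congr 1
  congr 1
  field_simp
  rw [hsqrt2]
end
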